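/- Let n be odd, a_1,…,a_n positive integers with a_n ≥ 3, and N = a_1 + ⋯ + a_n − 1. Then F[a_1,…,a_n] = (1 + y_N)·F[a_1,…,a_{n−1}, a_n − 1] − y_{N−1}·F[a_1,…,a_{n−1}, a_n − 2], and F[a_1,…,a_n] = (1 + y_N)·F[a_1,…,a_{n−1}] + y_{N−1} y_N·F[a_1,…,a_{n−1}, a_n − 2]. -/

import Mathlib

/-!
Let `F_s` be the sum of the monomials of the paths starting at the vertex `s`, so that `F_{p/q}`
is `F_s` at the top vertex. Splitting by the first step, `F_s = F_l + (∏_{r-1 < i ≤ s-1} y_i) F_r`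
for `s ≥ 2`, where `(l, r)` is the edge on which the triangle `T_{s-1}` with apex `s` is stacked.

For `n` odd, the last fan of `AT[a₁,…,aₙ]` consists of right triangles, all stacked on edges whose
left endpoint is the top vertex `M = a₁ + ⋯ + a_{n-1}` of `AT[a₁,…,a_{n-1}]` (the preceding fan
is a left fan) and whose right endpoint is the previous apex; there the recursion reads
`F_s = F_M + y_{s-1} F_{s-1}`. The part of the ancestral triangle below a vertex only depends on
the triangles below it, so `F_{M+k} = F[a₁,…,a_{n-1},k]` for `k ≤ aₙ` and `F_M = F[a₁,…,a_{n-1}]`.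
Both identities are linear combinations of the recursions at `s = N + 1` and `s = N`.
-/

noncomputable section

open scoped BigOperators

attribute [local instance] Classical.propDecidable

namespace TwoBridge

/-- The continued fraction `[a₁,…,aₙ] = 1/(a₁ + 1/(a₂ + ⋯ + 1/aₙ))`. -/
def cf : List ℕ → ℚ
  | [] => 0
  | a :: t => 1 / ((a : ℚ) + cf t)

/-- Partial sums `l_k = a₁ + ⋯ + a_k`. -/
def ell (a : List ℕ) (k : ℕ) : ℕ := (a.take k).sum

/-- The index of the fan containing the `i`-th triangle (1-based): the least `k` with
`i ≤ l_k − 1`.  Fan 1 consists of `T_1, …, T_{a₁−1}` and, for `k ≥ 2`, fan `k` consists of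
`T_{l_{k−1}}, …, T_{l_k − 1}`. -/
def fanIdx (a : List ℕ) (i : ℕ) : ℕ := sInf {k | i < ell a k}

/-- The `i`-th triangle (1-based) of the ancestral triangle of `[a₁,…,aₙ]` is a *right*
triangle iff it lies in an odd-indexed fan (first `a₁ − 1` triangles are right, the next
`a₂` left, the next `a₃` right, and so on alternately). -/
def isRight (a : List ℕ) (i : ℕ) : Prop := Odd (fanIdx a i)

/-- Vertex indices of the ancestral triangle: `0 ↦ 0/1`, `1 ↦ 1/1`, and `j + 1 ↦` the apex
(new vertex) of the triangle `T_j`.  `edgeIdx a i` is the pair of vertex indices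
(left endpoint, right endpoint) of the most recently created edge after stacking `i`
triangles; the triangle `T_{i+1}` is stacked on this edge. -/
def edgeIdx (a : List ℕ) : ℕ → ℕ × ℕ
  | 0 => (0, 1)
  | i + 1 => if isRight a (i + 1) then ((edgeIdx a i).1, i + 2) else (i + 2, (edgeIdx a i).2)

/-- The labels (numerator, denominator) of the endpoints of the active edge after stacking
`i` triangles; the new vertex of each triangle is labelled by the mediant of the two
endpoints of the edge it is stacked on. -/
def edgeLbl (a : List ℕ) : ℕ → (ℕ × ℕ) × (ℕ × ℕ)
  | 0 => ((0, 1), (1, 1))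
  | i + 1 =>
      if isRight a (i + 1) then
        ((edgeLbl a i).1,
          ((edgeLbl a i).1.1 + (edgeLbl a i).2.1, (edgeLbl a i).1.2 + (edgeLbl a i).2.2))
      else
        (((edgeLbl a i).1.1 + (edgeLbl a i).2.1, (edgeLbl a i).1.2 + (edgeLbl a i).2.2),
          (edgeLbl a i).2)

/-- The label (numerator, denominator) of the vertex with index `v`. -/
def vtxLabel (a : List ℕ) (v : ℕ) : ℕ × ℕ :=
  if v = 0 then (0, 1)
  else if v = 1 then (1, 1)
  else ((edgeLbl a (v - 2)).1.1 + (edgeLbl a (v - 2)).2.1,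
        (edgeLbl a (v - 2)).1.2 + (edgeLbl a (v - 2)).2.2)

/-- `u` and `w` are joined by an edge of the ancestral triangle. -/
def IsEdgeAT (a : List ℕ) (u w : ℕ) : Prop :=
  (u = 0 ∧ w = 1) ∨ (u = 1 ∧ w = 0) ∨
    (2 ≤ u ∧ (w = (edgeIdx a (u - 2)).1 ∨ w = (edgeIdx a (u - 2)).2)) ∨
    (2 ≤ w ∧ (u = (edgeIdx a (w - 2)).1 ∨ u = (edgeIdx a (w - 2)).2))

/-- A step of a path: an edge of the ancestral triangle along which the denominator of the
vertex label strictly decreases. -/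
def IsStep (a : List ℕ) (u w : ℕ) : Prop :=
  IsEdgeAT a u w ∧ (vtxLabel a w).2 < (vtxLabel a u).2

/-- `IsPathFrom a s γ` : `γ` is a path of the ancestral triangle of `a` starting at the
vertex with index `s` and ending at `0/1` or `1/1`, the denominator of the label strictly
decreasing along every edge. -/
def IsPathFrom (a : List ℕ) (s : ℕ) (γ : List ℕ) : Prop :=
  γ.head? = some s ∧ (γ.getLast? = some 0 ∨ γ.getLast? = some 1) ∧ List.Chain' (IsStep a) γ

/-- The (indices of the) triangles cut off to the left of the path by a single step from
vertex `u` down to vertex `w`. -/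
def stepLeft (a : List ℕ) (u w : ℕ) : Finset ℕ :=
  if 2 ≤ u ∧ w = (edgeIdx a (u - 2)).2 then Finset.Ioc (w - 1) (u - 1) else ∅

/-- The set `S_γ` of (indices of) triangles lying on the left side of the path `γ`. -/
def pathLeftSet (a : List ℕ) (γ : List ℕ) : Finset ℕ :=
  (γ.zip γ.tail).foldr (fun p s => stepLeft a p.1 p.2 ∪ s) ∅


/-- The `F`-polynomial `F_{p/q} = Σ_{γ ∈ Γ_{p/q}} ∏_{T_i ∈ S_γ} y_i` of `p/q = [a₁,…,aₙ]`
(the variable `y_i` is `MvPolynomial.X i`; the top vertex has index `a.sum = N + 1`).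
For the empty continued fraction this gives `1`. -/
def Fpoly (a : List ℕ) : MvPolynomial ℕ ℤ :=
  ∑ᶠ γ ∈ {γ : List ℕ | IsPathFrom a a.sum γ},
    ∏ i ∈ pathLeftSet a γ, (MvPolynomial.X i : MvPolynomial ℕ ℤ)

/-- `F`-polynomial with the convention `F[a₁,…,a_{n−1},0] = F[a₁,…,a_{n−2}]`. -/
def FpolyC (l : List ℕ) : MvPolynomial ℕ ℤ :=
  if l.getLast? = some 0 then Fpoly l.dropLast.dropLast else Fpoly l

open MvPolynomial

def pathsFrom (a : List ℕ) (s : ℕ) : Set (List ℕ) := {γ | IsPathFrom a s γ}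

def Ffrom (a : List ℕ) (s : ℕ) : MvPolynomial ℕ ℤ :=
  ∑ᶠ γ ∈ pathsFrom a s, ∏ i ∈ pathLeftSet a γ, (X i : MvPolynomial ℕ ℤ)

theorem Fpoly_eq_Ffrom (a : List ℕ) : Fpoly a = Ffrom a a.sum := rfl

section Geometry

variable (a : List ℕ)

theorem edgeIdx_lt (j : ℕ) : (edgeIdx a j).1 < j + 2 ∧ (edgeIdx a j).2 < j + 2 := by
  induction j with
  | zero => simp [edgeIdx]
  | succ k ih => rw [edgeIdx]; split <;> simp <;> omega

theorem edgeIdx_fst_ne_snd (j : ℕ) : (edgeIdx a j).1 ≠ (edgeIdx a j).2 := by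
  induction j with
  | zero => simp [edgeIdx]
  | succ k ih =>
    have := edgeIdx_lt a k
    rw [edgeIdx]; split <;> simp <;> omega

variable {a} in
theorem edgeIdx_succ_of_isRight {i : ℕ} (h : isRight a (i + 1)) :
    edgeIdx a (i + 1) = ((edgeIdx a i).1, i + 2) := by
  rw [edgeIdx, if_pos h]

variable {a} in
theorem edgeIdx_succ_of_not_isRight {i : ℕ} (h : ¬ isRight a (i + 1)) :
    edgeIdx a (i + 1) = (i + 2, (edgeIdx a i).2) := by
  rw [edgeIdx, if_neg h]

theorem one_le_edgeLbl_denom (i : ℕ) : 1 ≤ (edgeLbl a i).1.2 ∧ 1 ≤ (edgeLbl a i).2.2 := by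
  induction i with
  | zero => simp [edgeLbl]
  | succ k ih => rw [edgeLbl]; split <;> simp <;> omega

/-- The denominator of the apex of `T_{i+1}`. -/
def apexDenom (i : ℕ) : ℕ := (edgeLbl a i).1.2 + (edgeLbl a i).2.2

theorem strictMono_apexDenom : StrictMono (apexDenom a) := by
  refine strictMono_nat_of_lt_succ fun k => ?_
  have := one_le_edgeLbl_denom a k
  simp only [apexDenom]
  rw [edgeLbl]; split <;> simp <;> omega

variable {a} in
theorem vtxLabel_denom_lt {u w : ℕ} (hu : 2 ≤ u) (hwu : w < u) :
    (vtxLabel a w).2 < (vtxLabel a u).2 := by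
  have := one_le_edgeLbl_denom a (u - 2)
  have hu' : (vtxLabel a u).2 = apexDenom a (u - 2) := by
    simp [vtxLabel, apexDenom, show u ≠ 0 by omega, show u ≠ 1 by omega]
  rw [hu']
  by_cases hw : 2 ≤ w
  · have hw' : (vtxLabel a w).2 = apexDenom a (w - 2) := by
      simp [vtxLabel, apexDenom, show w ≠ 0 by omega, show w ≠ 1 by omega]
    rw [hw']
    exact strictMono_apexDenom a (by omega)
  · interval_cases w <;> simp [vtxLabel, apexDenom] <;> omega

variable {a} in
theorem isStep_iff {u w : ℕ} :
    IsStep a u w ↔ 2 ≤ u ∧ (w = (edgeIdx a (u - 2)).1 ∨ w = (edgeIdx a (u - 2)).2) := by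
  constructor
  · rintro ⟨⟨rfl, rfl⟩ | ⟨rfl, rfl⟩ | hdown | ⟨hw, hup⟩, hden⟩
    · simp [vtxLabel] at hden
    · simp [vtxLabel] at hden
    · exact hdown
    · have := edgeIdx_lt a (w - 2)
      have := vtxLabel_denom_lt (a := a) hw (show u < w by omega)
      omega
  · rintro ⟨hu, hw⟩
    have := edgeIdx_lt a (u - 2)
    exact ⟨Or.inr (Or.inr (Or.inl ⟨hu, hw⟩)), vtxLabel_denom_lt hu (by omega)⟩

end Geometry

section Paths

variable (a : List ℕ)

theorem not_isPathFrom_nil (s : ℕ) : ¬ IsPathFrom a s [] := by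
  simp [IsPathFrom]

theorem isPathFrom_singleton_iff {s u : ℕ} : IsPathFrom a s [u] ↔ u = s ∧ s ≤ 1 := by
  refine ⟨fun ⟨hhead, hlast, _⟩ => ?_,
    fun ⟨hus, hs⟩ => ⟨by rw [hus]; rfl, ?_, List.isChain_singleton u⟩⟩
  · simp only [List.head?_cons, Option.some.injEq, List.getLast?_singleton] at hhead hlast
    omega
  · simp only [List.getLast?_singleton, Option.some.injEq]
    omega

theorem isPathFrom_cons_cons_iff {s u w : ℕ} {t : List ℕ} :
    IsPathFrom a s (u :: w :: t) ↔ u = s ∧ IsStep a s w ∧ IsPathFrom a w (w :: t) := by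
  rw [IsPathFrom, IsPathFrom, List.getLast?_cons_cons]
  constructor
  · rintro ⟨hhead, hlast, hchain⟩
    obtain rfl : u = s := by simpa using hhead
    obtain ⟨hstep, hchain⟩ := List.isChain_cons_cons.mp hchain
    exact ⟨rfl, hstep, rfl, hlast, hchain⟩
  · rintro ⟨rfl, hstep, -, hlast, hchain⟩
    exact ⟨rfl, hlast, List.isChain_cons_cons.mpr ⟨hstep, hchain⟩⟩

theorem pathsFrom_of_le_one {s : ℕ} (hs : s ≤ 1) : pathsFrom a s = {[s]} := by
  ext (_ | ⟨u, _ | ⟨w, t⟩⟩)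
  · simp [pathsFrom, not_isPathFrom_nil]
  · simp [pathsFrom, isPathFrom_singleton_iff, hs]
  · simp [pathsFrom, isPathFrom_cons_cons_iff, isStep_iff]
    omega

theorem pathsFrom_of_two_le {s : ℕ} (hs : 2 ≤ s) :
    pathsFrom a s = List.cons s '' pathsFrom a (edgeIdx a (s - 2)).1 ∪
      List.cons s '' pathsFrom a (edgeIdx a (s - 2)).2 := by
  ext (_ | ⟨u, _ | ⟨w, t⟩⟩)
  · simp [pathsFrom, not_isPathFrom_nil]
  · simp [pathsFrom, isPathFrom_singleton_iff, not_isPathFrom_nil]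
    omega
  · simp only [pathsFrom, Set.mem_union, Set.mem_image, Set.mem_ofPred_eq, List.cons.injEq,
      isPathFrom_cons_cons_iff, isStep_iff, hs, true_and, exists_eq_right_right]
    constructor
    · rintro ⟨rfl, rfl | rfl, hpath⟩
      · exact Or.inl ⟨hpath, rfl⟩
      · exact Or.inr ⟨hpath, rfl⟩
    · rintro (⟨hpath, rfl⟩ | ⟨hpath, rfl⟩) <;>
        obtain rfl : w = _ := by simpa using hpath.1
      · exact ⟨rfl, Or.inl rfl, hpath⟩
      · exact ⟨rfl, Or.inr rfl, hpath⟩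

theorem pathsFrom_finite (s : ℕ) : (pathsFrom a s).Finite := by
  induction s using Nat.strong_induction_on with
  | _ s ih =>
    rcases le_or_gt 2 s with hs | hs
    · have := edgeIdx_lt a (s - 2)
      rw [pathsFrom_of_two_le a hs]
      exact ((ih _ (by omega)).image _).union ((ih _ (by omega)).image _)
    · rw [pathsFrom_of_le_one a (by omega)]
      exact Set.finite_singleton _

theorem disjoint_pathsFrom {s s' : ℕ} (h : s ≠ s') : Disjoint (pathsFrom a s) (pathsFrom a s') :=
  Set.disjoint_left.2 fun _ hγ hγ' => h (Option.some.inj (hγ.1.symm.trans hγ'.1))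

variable {a} in
theorem mem_stepLeft {u w x : ℕ} (hx : x ∈ stepLeft a u w) : w ≤ x ∧ x < u := by
  unfold stepLeft at hx
  split at hx
  · rw [Finset.mem_Ioc] at hx; omega
  · simp at hx

theorem pathLeftSet_cons_cons (u w : ℕ) (t : List ℕ) :
    pathLeftSet a (u :: w :: t) = stepLeft a u w ∪ pathLeftSet a (w :: t) := rfl

theorem lt_of_mem_pathLeftSet (t : List ℕ) {s : ℕ} (h : List.IsChain (IsStep a) (s :: t))
    {x : ℕ} (hx : x ∈ pathLeftSet a (s :: t)) : x < s := by
  induction t generalizing s with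
  | nil => simp [pathLeftSet] at hx
  | cons w t ih =>
    obtain ⟨hstep, hchain⟩ := List.isChain_cons_cons.mp h
    rw [pathLeftSet_cons_cons, Finset.mem_union] at hx
    rcases hx with hx | hx
    · exact (mem_stepLeft hx).2
    · have := isStep_iff.mp hstep
      have := edgeIdx_lt a (s - 2)
      have := ih hchain hx
      omega

end Paths

section Recursion

variable (a : List ℕ)

theorem Ffrom_of_le_one {s : ℕ} (hs : s ≤ 1) : Ffrom a s = 1 := by
  rw [Ffrom, pathsFrom_of_le_one a hs, finsum_mem_singleton]
  rfl

theorem finsum_image_cons_pathsFrom (s w : ℕ) :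
    ∑ᶠ γ ∈ List.cons s '' pathsFrom a w, ∏ i ∈ pathLeftSet a γ, (X i : MvPolynomial ℕ ℤ) =
      (∏ i ∈ stepLeft a s w, (X i : MvPolynomial ℕ ℤ)) * Ffrom a w := by
  rw [finsum_mem_image List.cons_injective.injOn, Ffrom, mul_finsum_mem]
  refine finsum_mem_congr rfl fun γ hγ => ?_
  obtain ⟨t, rfl⟩ : ∃ t, γ = w :: t := by
    rcases γ with _ | ⟨u, t⟩
    · exact absurd hγ (not_isPathFrom_nil a w)
    · obtain rfl : u = w := by simpa using hγ.1
      exact ⟨t, rfl⟩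
  have hdisj : Disjoint (stepLeft a s w) (pathLeftSet a (w :: t)) :=
    Finset.disjoint_left.2 fun x hx hx' =>
      (lt_of_mem_pathLeftSet a t hγ.2.2 hx').not_ge (mem_stepLeft hx).1
  rw [pathLeftSet_cons_cons, Finset.prod_union hdisj]

theorem Ffrom_rec {s : ℕ} (hs : 2 ≤ s) :
    Ffrom a s = Ffrom a (edgeIdx a (s - 2)).1 +
      (∏ i ∈ Finset.Ioc ((edgeIdx a (s - 2)).2 - 1) (s - 1), (X i : MvPolynomial ℕ ℤ)) *
        Ffrom a (edgeIdx a (s - 2)).2 := by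
  have hdisj := (Set.disjoint_image_iff (List.cons_injective (a := s))).2
    (disjoint_pathsFrom a (edgeIdx_fst_ne_snd a (s - 2)))
  have hleft : stepLeft a s (edgeIdx a (s - 2)).1 = ∅ := by
    simp [stepLeft, edgeIdx_fst_ne_snd]
  have hright : stepLeft a s (edgeIdx a (s - 2)).2 =
      Finset.Ioc ((edgeIdx a (s - 2)).2 - 1) (s - 1) := by
    simp [stepLeft, hs]
  rw [Ffrom, pathsFrom_of_two_le a hs, finsum_mem_union hdisj
    ((pathsFrom_finite a _).image _) ((pathsFrom_finite a _).image _),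
    finsum_image_cons_pathsFrom, finsum_image_cons_pathsFrom, hleft, hright,
    Finset.prod_empty, one_mul]

theorem edgeIdx_congr {b c : List ℕ} {j : ℕ} (h : ∀ i ≤ j, fanIdx b i = fanIdx c i) :
    edgeIdx b j = edgeIdx c j := by
  induction j with
  | zero => rfl
  | succ k ih =>
    have hr : isRight b (k + 1) ↔ isRight c (k + 1) := by rw [isRight, isRight, h (k + 1) le_rfl]
    have he := ih fun i hi => h i (by omega)
    by_cases hb : isRight b (k + 1)
    · rw [edgeIdx_succ_of_isRight hb, edgeIdx_succ_of_isRight (hr.1 hb), he]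
    · rw [edgeIdx_succ_of_not_isRight hb, edgeIdx_succ_of_not_isRight (mt hr.2 hb), he]

theorem Ffrom_congr {b c : List ℕ} {v : ℕ} (h : ∀ i < v, fanIdx b i = fanIdx c i) :
    Ffrom b v = Ffrom c v := by
  induction v using Nat.strong_induction_on with
  | _ v ih =>
    rcases le_or_gt 2 v with hv | hv
    · have he : edgeIdx b (v - 2) = edgeIdx c (v - 2) := edgeIdx_congr fun i hi => h i (by omega)
      have := edgeIdx_lt c (v - 2)
      rw [Ffrom_rec b hv, Ffrom_rec c hv, he, ih _ (by omega) fun i hi => h i (by omega),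
        ih _ (by omega) fun i hi => h i (by omega)]
    · rw [Ffrom_of_le_one b (by omega), Ffrom_of_le_one c (by omega)]

end Recursion

section Fans

theorem fanIdx_eq_succ {a : List ℕ} {i k : ℕ} (h₁ : ell a k ≤ i) (h₂ : i < ell a (k + 1)) :
    fanIdx a i = k + 1 := by
  refine le_antisymm (Nat.sInf_le h₂) (le_csInf ⟨_, h₂⟩ fun m (hm : i < ell a m) => ?_)
  by_contra! hmk
  exact (List.monotone_sum_take a (Nat.le_of_lt_succ hmk)).not_gt (h₁.trans_lt hm)

variable {as : List ℕ}

theorem ell_append_of_le (l : List ℕ) {k : ℕ} (hk : k ≤ as.length) :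
    ell (as ++ l) k = ell as k := by
  rw [ell, ell, List.take_append_of_le_length hk]

theorem ell_length : ell as as.length = as.sum := by
  rw [ell, List.take_length]

theorem fanIdx_append_singleton {m i : ℕ} (h₁ : as.sum ≤ i) (h₂ : i < as.sum + m) :
    fanIdx (as ++ [m]) i = as.length + 1 := by
  refine fanIdx_eq_succ ?_ ?_
  · rwa [ell_append_of_le _ le_rfl, ell_length]
  · rwa [ell, List.take_of_length_le (by simp), List.sum_append, List.sum_singleton]

theorem fanIdx_append (l : List ℕ) {i : ℕ} (hi : i < as.sum) :
    fanIdx (as ++ l) i = fanIdx as i := by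
  unfold fanIdx
  congr 1
  ext k
  rcases le_or_gt k as.length with hk | hk
  · rw [Set.mem_ofPred_eq, Set.mem_ofPred_eq, ell_append_of_le l hk]
  · have hbefore : ell as k = as.sum := by rw [ell, List.take_of_length_le hk.le]
    have hafter : as.sum ≤ ell (as ++ l) k := by
      rw [← ell_length, ← ell_append_of_le l le_rfl]
      exact List.monotone_sum_take _ hk.le
    simp only [Set.mem_ofPred_eq]
    omega

theorem fanIdx_append_singleton_congr {m m' i : ℕ} (hm : m' ≤ m) (hi : i < as.sum + m') :
    fanIdx (as ++ [m]) i = fanIdx (as ++ [m']) i := by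
  rcases lt_or_ge i as.sum with h | h
  · rw [fanIdx_append _ h, fanIdx_append _ h]
  · rw [fanIdx_append_singleton h (by omega), fanIdx_append_singleton h hi]

theorem Fpoly_eq_Ffrom_append (l : List ℕ) : Fpoly as = Ffrom (as ++ l) as.sum :=
  Ffrom_congr fun _ hi => (fanIdx_append l hi).symm

theorem Fpoly_append_singleton_eq_Ffrom {m m' : ℕ} (hm : m' ≤ m) :
    Fpoly (as ++ [m']) = Ffrom (as ++ [m]) (as.sum + m') := by
  rw [Fpoly_eq_Ffrom, List.sum_append, List.sum_singleton]
  exact Ffrom_congr fun _ hi => (fanIdx_append_singleton_congr hm hi).symm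

theorem isRight_append_singleton (heven : Even as.length) {m i : ℕ} (h₁ : as.sum ≤ i)
    (h₂ : i < as.sum + m) : isRight (as ++ [m]) i := by
  rw [isRight, fanIdx_append_singleton h₁ h₂]
  exact heven.add_one

theorem not_isRight_append_singleton_sum_sub_one (hpos : ∀ x ∈ as, 0 < x)
    (heven : Even as.length) (hne : as ≠ []) (m : ℕ) : ¬ isRight (as ++ [m]) (as.sum - 1) := by
  obtain ⟨bs, x, rfl⟩ := (List.eq_nil_or_concat' as).resolve_left hne
  have hx := hpos x (by simp)
  simp only [List.sum_append, List.sum_singleton] at hpos ⊢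
  rw [isRight, fanIdx_append _ (by simp; omega), fanIdx_append_singleton (by omega) (by omega),
    Nat.odd_add_one, not_not]
  simpa [Nat.even_add_one] using heven

theorem edgeIdx_append_singleton (hpos : ∀ x ∈ as, 0 < x) (heven : Even as.length) {m j : ℕ}
    (h₁ : as.sum ≤ j) (h₂ : j < as.sum + m) : edgeIdx (as ++ [m]) j = (as.sum, j + 1) := by
  induction j, h₁ using Nat.le_induction with
  | base =>
    rcases eq_or_ne as [] with rfl | hne
    · rfl
    · have hlen : 2 ≤ as.length := by
        obtain ⟨r, hr⟩ := heven
        have := List.length_pos_iff.2 hne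
        omega
      have := as.length_le_sum_of_one_le hpos
      obtain ⟨k, hk⟩ : ∃ k, as.sum = k + 2 := ⟨as.sum - 2, by omega⟩
      have hleft := not_isRight_append_singleton_sum_sub_one hpos heven hne m
      rw [hk] at hleft ⊢
      rw [edgeIdx_succ_of_isRight (isRight_append_singleton heven (by omega) (by omega)),
        edgeIdx_succ_of_not_isRight hleft]
  | succ j hj ih =>
    rw [edgeIdx_succ_of_isRight (isRight_append_singleton heven (by omega) h₂), ih (by omega)]

theorem Ffrom_append_singleton (hpos : ∀ x ∈ as, 0 < x) (heven : Even as.length) {m s : ℕ}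
    (h₁ : as.sum + 2 ≤ s) (h₂ : s ≤ as.sum + m) :
    Ffrom (as ++ [m]) s = Ffrom (as ++ [m]) as.sum + X (s - 1) * Ffrom (as ++ [m]) (s - 1) := by
  obtain ⟨k, rfl⟩ : ∃ k, s = k + 2 := ⟨s - 2, by omega⟩
  rw [Ffrom_rec _ (by omega), Nat.add_sub_cancel,
    edgeIdx_append_singleton hpos heven (by omega) (by omega), Nat.add_sub_cancel,
    show k + 2 - 1 = k + 1 by omega, Nat.Ioc_succ_singleton, Finset.prod_singleton]

end Fans

/-- **Corollary.**  Let `n` be odd, `a₁,…,aₙ` positive integers with `aₙ ≥ 3` (the first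
`n − 1` entries form the list `as`, `aₙ = an`), and `N = a₁ + ⋯ + aₙ − 1`.  Then
`F[a₁,…,aₙ] = (1 + y_N)·F[a₁,…,a_{n−1}, aₙ − 1] − y_{N−1}·F[a₁,…,a_{n−1}, aₙ − 2]` and
`F[a₁,…,aₙ] = (1 + y_N)·F[a₁,…,a_{n−1}] + y_{N−1} y_N·F[a₁,…,a_{n−1}, aₙ − 2]`. -/
theorem F_polynomial_recursion_odd (as : List ℕ) (an : ℕ)
    (hpos : ∀ x ∈ as, 0 < x) (han : 3 ≤ an) (hodd : Odd (as.length + 1)) :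
    Fpoly (as ++ [an]) =
        (1 + MvPolynomial.X ((as ++ [an]).sum - 1)) * Fpoly (as ++ [an - 1]) -
          MvPolynomial.X ((as ++ [an]).sum - 2) * Fpoly (as ++ [an - 2]) ∧
    Fpoly (as ++ [an]) =
        (1 + MvPolynomial.X ((as ++ [an]).sum - 1)) * Fpoly as +
          MvPolynomial.X ((as ++ [an]).sum - 2) *
            MvPolynomial.X ((as ++ [an]).sum - 1) * Fpoly (as ++ [an - 2]) := by
  have heven : Even as.length := by simpa [Nat.odd_add_one] using hodd
  have top := Ffrom_append_singleton hpos heven (m := an) (s := as.sum + an) (by omega) le_rfl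
  have below := Ffrom_append_singleton hpos heven (m := an) (s := as.sum + an - 1)
    (by omega) (by omega)
  rw [show as.sum + an - 1 - 1 = as.sum + an - 2 by omega] at below
  rw [Fpoly_append_singleton_eq_Ffrom (m := an) (show an - 1 ≤ an by omega),
    Fpoly_append_singleton_eq_Ffrom (m := an) (show an - 2 ≤ an by omega),
    Fpoly_eq_Ffrom_append (as := as) [an], Fpoly_eq_Ffrom, List.sum_append, List.sum_singleton,
    show as.sum + (an - 1) = as.sum + an - 1 by omega,
    show as.sum + (an - 2) = as.sum + an - 2 by omega]
  constructor
  · linear_combination top - below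
  · linear_combination top + X (as.sum + an - 1) * below

end TwoBridge

end
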